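/- If a nested-sequent Γ ⇒ Δ, T is not provable in NSMB, then Γ ⇒ Δ, T is false in the canonical model (S_C, R_C, P_C, V_C) under the canonical embedding E_C. -/

import Mathlib

set_option maxHeartbeats 1000000

namespace MBQL

/-- The fixed finite set `J ⊆ [0,1]` of inner-product values, with `0, 1 ∈ J`. -/
structure MBParams where
  J : Set ℝ
  finite : J.Finite
  subI : J ⊆ Set.Icc (0:ℝ) 1
  zero_mem : (0:ℝ) ∈ J
  one_mem : (1:ℝ) ∈ J

/-- Formulas of **MB**: `A ::= p | ⊤ | ⊥ | ¬A | A∧A | □^c_α A | □^o_α A` (α ∈ J). -/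
inductive MBForm (Pm : MBParams) : Type
  | var : ℕ → MBForm Pm
  | top : MBForm Pm
  | bot : MBForm Pm
  | neg : MBForm Pm → MBForm Pm
  | conj : MBForm Pm → MBForm Pm → MBForm Pm
  | boxc : Pm.J → MBForm Pm → MBForm Pm
  | boxo : Pm.J → MBForm Pm → MBForm Pm

noncomputable instance {Pm : MBParams} : DecidableEq (MBForm Pm) := Classical.decEq _

/-- Valuation of a formula, given worlds `S`, a relation `R : S → S → ℝ` and a
valuation `V` of the propositional variables. -/
def MBForm.valR {Pm : MBParams} {S : Type} (R : S → S → ℝ) (V : ℕ → Set S) :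
    MBForm Pm → Set S
  | .var n => V n
  | .top => Set.univ
  | .bot => ∅
  | .neg A => (A.valR R V)ᶜ
  | .conj A B => A.valR R V ∩ B.valR R V
  | .boxc α A => {s | ∀ t, (α : ℝ) ≤ R s t → t ∈ A.valR R V}
  | .boxo α A => {s | ∀ t, (α : ℝ) < R s t → t ∈ A.valR R V}

/-- An EQL-frame. -/
structure EQLFrame where
  S : Type
  nonempty : Nonempty S
  R : S → S → ℝ
  mem_Icc : ∀ s t, R s t ∈ Set.Icc (0:ℝ) 1
  eq_one_iff : ∀ s t, (R s t = 1 ↔ s = t)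
  symm : ∀ s t, R s t = R t s

/-- An MB-realization. -/
structure MBRealization (Pm : MBParams) where
  F : EQLFrame
  P : Set (Set F.S)
  univ_mem : Set.univ ∈ P
  empty_mem : ∅ ∈ P
  inter_mem : ∀ X ∈ P, ∀ Y ∈ P, X ∩ Y ∈ P
  compl_mem : ∀ X ∈ P, Xᶜ ∈ P
  boxc_mem : ∀ α ∈ Pm.J, ∀ X ∈ P, {s | ∀ t, α ≤ F.R s t → t ∈ X} ∈ P
  boxo_mem : ∀ α ∈ Pm.J, ∀ X ∈ P, {s | ∀ t, α < F.R s t → t ∈ X} ∈ P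
  V : ℕ → Set F.S
  V_mem : ∀ n, V n ∈ P

/-- The extended valuation of a formula in an MB-realization. -/
def MBRealization.val {Pm : MBParams} (M : MBRealization Pm) (A : MBForm Pm) :
    Set M.F.S := A.valR M.F.R M.V

/-- Validity of an MB-formula. -/
def MBValid {Pm : MBParams} (A : MBForm Pm) : Prop :=
  ∀ (M : MBRealization Pm) (s : M.F.S), s ∈ M.val A

inductive Side : Type
  | c : Side
  | o : Side
deriving DecidableEq

/-- A label `(α, d)` on a modal bracket, with `α ∈ J − {1}`. -/
structure MBLab (Pm : MBParams) where
  α : ℝ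
  memJ : α ∈ Pm.J
  ne_one : α ≠ 1
  d : Side

mutual
/-- Nested-sequents: a finite tree whose nodes are sequents (pairs of finite
sets of formulas) and whose edges carry labels. -/
inductive NSeq (Pm : MBParams) : Type
  | node : Finset (MBForm Pm) → Finset (MBForm Pm) → NSeqs Pm → NSeq Pm
/-- A finite list of labelled child nested-sequents. -/
inductive NSeqs (Pm : MBParams) : Type
  | nil : NSeqs Pm
  | cons : MBLab Pm → NSeq Pm → NSeqs Pm → NSeqs Pm
end

/-- The `i`-th labelled child. -/
def NSeqs.get {Pm : MBParams} : NSeqs Pm → ℕ → Option (MBLab Pm × NSeq Pm)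
  | .nil, _ => none
  | .cons l t _, 0 => some (l, t)
  | .cons _ _ ts, n+1 => ts.get n

/-- `SubAt t p u`: the subtree of `t` at the path (node address) `p` is `u`. -/
inductive SubAt {Pm : MBParams} : NSeq Pm → List ℕ → NSeq Pm → Prop
  | here (t : NSeq Pm) : SubAt t [] t
  | there {Γ Δ : Finset (MBForm Pm)} {ts : NSeqs Pm} {i : ℕ} {l : MBLab Pm}
      {u v : NSeq Pm} {p : List ℕ} :
      NSeqs.get ts i = some (l, u) → SubAt u p v → SubAt (.node Γ Δ ts) (i :: p) v

/-- `p` is (the address of) a node of `t`. -/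
def IsNode {Pm : MBParams} (t : NSeq Pm) (p : List ℕ) : Prop := ∃ u, SubAt t p u

mutual
/-- Replace the sequent at the node with address `p` by `Γ' ⇒ Δ'`
(children are kept). -/
def NSeq.setSeq {Pm : MBParams} :
    NSeq Pm → List ℕ → Finset (MBForm Pm) → Finset (MBForm Pm) → NSeq Pm
  | .node _ _ ts, [], Γ', Δ' => .node Γ' Δ' ts
  | .node Γ Δ ts, i :: p, Γ', Δ' => .node Γ Δ (NSeqs.setSeqs ts i p Γ' Δ')
def NSeqs.setSeqs {Pm : MBParams} :
    NSeqs Pm → ℕ → List ℕ → Finset (MBForm Pm) → Finset (MBForm Pm) → NSeqs Pm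
  | .nil, _, _, _, _ => .nil
  | .cons l t ts, 0, p, Γ', Δ' => .cons l (t.setSeq p Γ' Δ') ts
  | .cons l t ts, n+1, p, Γ', Δ' => .cons l t (NSeqs.setSeqs ts n p Γ' Δ')
end

/-- Append a labelled child at the end of a children list. -/
def NSeqs.snoc {Pm : MBParams} : NSeqs Pm → MBLab Pm → NSeq Pm → NSeqs Pm
  | .nil, l, u => .cons l u .nil
  | .cons l' t ts, l, u => .cons l' t (ts.snoc l u)

mutual
/-- Add a new child `[u]_l` at the node with address `p`. -/
def NSeq.addChild {Pm : MBParams} : NSeq Pm → List ℕ → MBLab Pm → NSeq Pm → NSeq Pm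
  | .node Γ Δ ts, [], l, u => .node Γ Δ (ts.snoc l u)
  | .node Γ Δ ts, i :: p, l, u => .node Γ Δ (NSeqs.addChilds ts i p l u)
def NSeqs.addChilds {Pm : MBParams} : NSeqs Pm → ℕ → List ℕ → MBLab Pm → NSeq Pm → NSeqs Pm
  | .nil, _, _, _, _ => .nil
  | .cons l' t ts, 0, p, l, u => .cons l' (t.addChild p l u) ts
  | .cons l' t ts, n+1, p, l, u => .cons l' t (NSeqs.addChilds ts n p l u)
end


/-- Logical connectives defined by abbreviation: `A ∨ B`. -/
def MBForm.or {Pm : MBParams} (A B : MBForm Pm) : MBForm Pm := .neg (.conj (.neg A) (.neg B))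

/-- `A → B := ¬A ∨ B`. -/
def MBForm.imp {Pm : MBParams} (A B : MBForm Pm) : MBForm Pm := (MBForm.neg A).or B

/-- Conjunction of a list of formulas. -/
def conjList {Pm : MBParams} : List (MBForm Pm) → MBForm Pm
  | [] => .top
  | [A] => A
  | A :: B :: rest => .conj A (conjList (B :: rest))

/-- Disjunction of a list of formulas. -/
def disjList {Pm : MBParams} : List (MBForm Pm) → MBForm Pm
  | [] => .bot
  | [A] => A
  | A :: B :: rest => (A).or (disjList (B :: rest))

/-- `⋀Γ → ⋁Δ`. -/
noncomputable def seqForm {Pm : MBParams} (Γ Δ : Finset (MBForm Pm)) : MBForm Pm :=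
  (conjList Γ.toList).imp (disjList Δ.toList)

/-- The box corresponding to a bracket label. -/
def MBLab.box {Pm : MBParams} (l : MBLab Pm) (A : MBForm Pm) : MBForm Pm :=
  match l.d with
  | .c => .boxc ⟨l.α, l.memJ⟩ A
  | .o => .boxo ⟨l.α, l.memJ⟩ A

mutual
/-- The interpretation `τ` of a nested-sequent as a formula. -/
noncomputable def NSeq.tau {Pm : MBParams} : NSeq Pm → MBForm Pm
  | .node Γ Δ ts => NSeqs.tauAux (seqForm Γ Δ) ts
noncomputable def NSeqs.tauAux {Pm : MBParams} : MBForm Pm → NSeqs Pm → MBForm Pm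
  | A, .nil => A
  | A, .cons l t ts => NSeqs.tauAux (A.or (l.box t.tau)) ts
end

/-- `E` is an embedding of the nested-sequent `t` into the realization `M`
(`E` is given on node addresses). -/
def IsEmb {Pm : MBParams} (M : MBRealization Pm) (t : NSeq Pm)
    (E : List ℕ → M.F.S) : Prop :=
  ∀ p Γ Δ ts i l u, SubAt t p (.node Γ Δ ts) → NSeqs.get ts i = some (l, u) →
    (l.d = Side.c → l.α ≤ M.F.R (E p) (E (p ++ [i]))) ∧
    (l.d = Side.o → l.α < M.F.R (E p) (E (p ++ [i])))

/-- The nested-sequent `t` is false in `M` under `E`. -/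
def FalseUnder {Pm : MBParams} (M : MBRealization Pm) (t : NSeq Pm)
    (E : List ℕ → M.F.S) : Prop :=
  ∀ p Γ Δ ts, SubAt t p (.node Γ Δ ts) →
    (∀ A ∈ Γ, E p ∈ M.val A) ∧ (∀ A ∈ Δ, E p ∉ M.val A)

/-- Validity of a nested-sequent: it is not false under any embedding into
any MB-realization. -/
def NSValid {Pm : MBParams} (t : NSeq Pm) : Prop :=
  ∀ (M : MBRealization Pm) (E : List ℕ → M.F.S), IsEmb M t E → ¬ FalseUnder M t E


/-- `□^d_α A`. -/
def mkBox {Pm : MBParams} (d : Side) (α : Pm.J) (A : MBForm Pm) : MBForm Pm :=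
  match d with
  | .c => .boxc α A
  | .o => .boxo α A

/-- The total order `⪯` on `I × {c,o}`: `pleq α d β d'` means `(α,d) ⪯ (β,d')`. -/
def pleq : ℝ → Side → ℝ → Side → Prop
  | α, .o, β, .c => α < β
  | α, _, β, _ => α ≤ β

/-- Provability in the nested-sequent calculus **NSMB**.  The boolean
parameter records whether the rule (cut) may be used. -/
inductive Provable {Pm : MBParams} : Bool → NSeq Pm → Prop
  /-- axiom `‖A, Γ ⇒ Δ, A, T‖` -/
  | axId {cut : Bool} {t : NSeq Pm} {p Γ Δ ts A} :
      SubAt t p (.node Γ Δ ts) → A ∈ Γ → A ∈ Δ → Provable cut t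
  /-- axiom `‖Γ ⇒ Δ, ⊤, T‖` -/
  | axTop {cut : Bool} {t : NSeq Pm} {p Γ Δ ts} :
      SubAt t p (.node Γ Δ ts) → MBForm.top ∈ Δ → Provable cut t
  /-- axiom `‖⊥, Γ ⇒ Δ, T‖` -/
  | axBot {cut : Bool} {t : NSeq Pm} {p Γ Δ ts} :
      SubAt t p (.node Γ Δ ts) → MBForm.bot ∈ Γ → Provable cut t
  /-- axiom `‖Γ ⇒ Δ, □^o_1 A, T‖` -/
  | axBoxO1 {cut : Bool} {t : NSeq Pm} {p Γ Δ ts A} :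
      SubAt t p (.node Γ Δ ts) → MBForm.boxo ⟨1, Pm.one_mem⟩ A ∈ Δ → Provable cut t
  /-- rule (cut) -/
  | cutR {t : NSeq Pm} {p Γ Δ ts A} :
      SubAt t p (.node Γ Δ ts) →
      Provable true (t.setSeq p Γ (insert A Δ)) →
      Provable true (t.setSeq p (insert A Γ) Δ) →
      Provable true t
  /-- rule (wL) -/
  | wL {cut : Bool} {t : NSeq Pm} {p Γ Δ ts A} :
      SubAt t p (.node Γ Δ ts) → Provable cut t →
      Provable cut (t.setSeq p (insert A Γ) Δ)
  /-- rule (wR) -/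
  | wR {cut : Bool} {t : NSeq Pm} {p Γ Δ ts A} :
      SubAt t p (.node Γ Δ ts) → Provable cut t →
      Provable cut (t.setSeq p Γ (insert A Δ))
  /-- rule (¬L) -/
  | negL {cut : Bool} {t : NSeq Pm} {p Γ Δ ts A} :
      SubAt t p (.node Γ Δ ts) →
      Provable cut (t.setSeq p Γ (insert A Δ)) →
      Provable cut (t.setSeq p (insert (MBForm.neg A) Γ) Δ)
  /-- rule (¬R) -/
  | negR {cut : Bool} {t : NSeq Pm} {p Γ Δ ts A} :
      SubAt t p (.node Γ Δ ts) →
      Provable cut (t.setSeq p (insert A Γ) Δ) →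
      Provable cut (t.setSeq p Γ (insert (MBForm.neg A) Δ))
  /-- rule (∧L) -/
  | andL {cut : Bool} {t : NSeq Pm} {p Γ Δ ts A B} :
      SubAt t p (.node Γ Δ ts) →
      Provable cut (t.setSeq p (insert A (insert B Γ)) Δ) →
      Provable cut (t.setSeq p (insert (MBForm.conj A B) Γ) Δ)
  /-- rule (∧R) -/
  | andR {cut : Bool} {t : NSeq Pm} {p Γ Δ ts A B} :
      SubAt t p (.node Γ Δ ts) →
      Provable cut (t.setSeq p Γ (insert A Δ)) →
      Provable cut (t.setSeq p Γ (insert B Δ)) →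
      Provable cut (t.setSeq p Γ (insert (MBForm.conj A B) Δ))
  /-- rule (□L), with side condition `(α,d) ⪯ (β,d')` -/
  | boxL {cut : Bool} {t : NSeq Pm} {p Γ Δ ts i l u Γ' Δ' ts' A} {α : Pm.J} {d : Side} :
      SubAt t p (.node Γ Δ ts) → NSeqs.get ts i = some (l, u) →
      SubAt t (p ++ [i]) (.node Γ' Δ' ts') →
      pleq (α : ℝ) d l.α l.d →
      Provable cut (t.setSeq (p ++ [i]) (insert A Γ') Δ') →
      Provable cut (t.setSeq p (insert (mkBox d α A) Γ) Δ)
  /-- rule (□L sym), with side condition `(α,d) ⪯ (β,d')` -/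
  | boxLsym {cut : Bool} {t : NSeq Pm} {p Γ Δ ts i l u Γ' Δ' ts' A} {α : Pm.J} {d : Side} :
      SubAt t p (.node Γ Δ ts) → NSeqs.get ts i = some (l, u) →
      SubAt t (p ++ [i]) (.node Γ' Δ' ts') →
      pleq (α : ℝ) d l.α l.d →
      Provable cut (t.setSeq p (insert A Γ) Δ) →
      Provable cut (t.setSeq (p ++ [i]) (insert (mkBox d α A) Γ') Δ')
  /-- rule (□L self), with side condition `(α,d) ≠ (1,o)` -/
  | boxLself {cut : Bool} {t : NSeq Pm} {p Γ Δ ts A} {α : Pm.J} {d : Side} :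
      SubAt t p (.node Γ Δ ts) → ¬((α : ℝ) = 1 ∧ d = Side.o) →
      Provable cut (t.setSeq p (insert A Γ) Δ) →
      Provable cut (t.setSeq p (insert (mkBox d α A) Γ) Δ)
  /-- rule (□^c_0): erase `A` from the left of one node and add `□^c_0 A`
  to the left of another arbitrary node -/
  | boxC0 {cut : Bool} {t : NSeq Pm} {p Γ Δ ts q Γ'' Δ'' ts'' A} :
      SubAt t p (.node Γ Δ ts) → SubAt t q (.node Γ'' Δ'' ts'') →
      Provable cut (t.setSeq p (insert A Γ) Δ) →
      Provable cut (t.setSeq q (insert (MBForm.boxc ⟨0, Pm.zero_mem⟩ A) Γ'') Δ'')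
  /-- rule (□R) -/
  | boxR {cut : Bool} {t : NSeq Pm} {p Γ Δ ts A} {l : MBLab Pm} :
      SubAt t p (.node Γ Δ ts) →
      Provable cut (t.addChild p l (.node ∅ {A} .nil)) →
      Provable cut (t.setSeq p Γ (insert (l.box A) Δ))
  /-- rule (□R self) -/
  | boxRself {cut : Bool} {t : NSeq Pm} {p Γ Δ ts A} :
      SubAt t p (.node Γ Δ ts) →
      Provable cut (t.setSeq p Γ (insert A Δ)) →
      Provable cut (t.setSeq p Γ (insert (MBForm.boxc ⟨1, Pm.one_mem⟩ A) Δ))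


/-- The subformula relation. -/
inductive Subf {Pm : MBParams} : MBForm Pm → MBForm Pm → Prop
  | refl (A : MBForm Pm) : Subf A A
  | negS {A B : MBForm Pm} : Subf A B → Subf A (.neg B)
  | conjL {A B C : MBForm Pm} : Subf A B → Subf A (.conj B C)
  | conjR {A B C : MBForm Pm} : Subf A C → Subf A (.conj B C)
  | boxcS {A B : MBForm Pm} {α : Pm.J} : Subf A B → Subf A (.boxc α B)
  | boxoS {A B : MBForm Pm} {α : Pm.J} : Subf A B → Subf A (.boxo α B)

/-- `A` occurs in (some sequent of) the nested-sequent `t`. -/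
def OccursIn {Pm : MBParams} (A : MBForm Pm) (t : NSeq Pm) : Prop :=
  ∃ p Γ Δ ts, SubAt t p (.node Γ Δ ts) ∧ (A ∈ Γ ∨ A ∈ Δ)

/-- One step of the saturation procedure used to build `Γ_C ⇒ Δ_C, T_C`.
The state is a nested-sequent together with the set of (address, formula)
occurrences of right-hand boxed formulas that have already been processed by
step (8). -/
inductive SatStep {Pm : MBParams} :
    NSeq Pm × Set (List ℕ × MBForm Pm) → NSeq Pm × Set (List ℕ × MBForm Pm) → Prop
  /-- step (1): `A ∧ B` on the left -/
  | andL {t D p Γ Δ ts A B} :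
      SubAt t p (.node Γ Δ ts) → MBForm.conj A B ∈ Γ →
      SatStep (t, D) (t.setSeq p (insert A (insert B Γ)) Δ, D)
  /-- step (2): `A ∧ B` on the right; the disjunct keeping unprovability is adopted -/
  | andR {t D p Γ Δ ts A B C} :
      SubAt t p (.node Γ Δ ts) → MBForm.conj A B ∈ Δ → (C = A ∨ C = B) →
      ¬ Provable true (t.setSeq p Γ (insert C Δ)) →
      SatStep (t, D) (t.setSeq p Γ (insert C Δ), D)
  /-- step (3): `¬A` on the left -/
  | negL {t D p Γ Δ ts A} :
      SubAt t p (.node Γ Δ ts) → MBForm.neg A ∈ Γ →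
      SatStep (t, D) (t.setSeq p Γ (insert A Δ), D)
  /-- step (4): `¬A` on the right -/
  | negR {t D p Γ Δ ts A} :
      SubAt t p (.node Γ Δ ts) → MBForm.neg A ∈ Δ →
      SatStep (t, D) (t.setSeq p (insert A Γ) Δ, D)
  /-- step (5): `□^d_α A` on the left of the parent of a bracket with `(α,d) ⪯ (β,d')` -/
  | boxL {t D p Γ Δ ts i l u Γ' Δ' ts' A} {α : Pm.J} {d : Side} :
      SubAt t p (.node Γ Δ ts) → NSeqs.get ts i = some (l, u) →
      SubAt t (p ++ [i]) (.node Γ' Δ' ts') →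
      pleq (α : ℝ) d l.α l.d → mkBox d α A ∈ Γ →
      SatStep (t, D) (t.setSeq (p ++ [i]) (insert A Γ') Δ', D)
  /-- step (6): `□^d_α A` on the left of the child of a bracket with `(α,d) ⪯ (β,d')` -/
  | boxLsym {t D p Γ Δ ts i l u Γ' Δ' ts' A} {α : Pm.J} {d : Side} :
      SubAt t p (.node Γ Δ ts) → NSeqs.get ts i = some (l, u) →
      SubAt t (p ++ [i]) (.node Γ' Δ' ts') →
      pleq (α : ℝ) d l.α l.d → mkBox d α A ∈ Γ' →
      SatStep (t, D) (t.setSeq p (insert A Γ) Δ, D)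
  /-- step (7): `□^d_α A` on the left, `(α,d) ≠ (1,o)` -/
  | boxLself {t D p Γ Δ ts A} {α : Pm.J} {d : Side} :
      SubAt t p (.node Γ Δ ts) → ¬((α : ℝ) = 1 ∧ d = Side.o) → mkBox d α A ∈ Γ →
      SatStep (t, D) (t.setSeq p (insert A Γ) Δ, D)
  /-- step (8): `□^d_α A` on the right (`α ≠ 1`), performed once per occurrence -/
  | boxR {t D p Γ Δ ts A} {α : Pm.J} {d : Side} (hne : (α : ℝ) ≠ 1) :
      SubAt t p (.node Γ Δ ts) → mkBox d α A ∈ Δ → (p, mkBox d α A) ∉ D →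
      SatStep (t, D)
        (t.addChild p ⟨(α : ℝ), α.2, hne, d⟩ (.node ∅ {A} .nil),
         insert (p, mkBox d α A) D)
  /-- step (9): `□^c_1 A` on the right -/
  | boxRself {t D p Γ Δ ts A} :
      SubAt t p (.node Γ Δ ts) → MBForm.boxc ⟨1, Pm.one_mem⟩ A ∈ Δ →
      SatStep (t, D) (t.setSeq p Γ (insert A Δ), D)
  /-- step (10): `□^c_0 A` on the left of some node: add `A` to the left of any node -/
  | boxC0 {t D p Γ Δ ts q Γ'' Δ'' ts'' A} :
      SubAt t p (.node Γ Δ ts) → MBForm.boxc ⟨0, Pm.zero_mem⟩ A ∈ Γ →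
      SubAt t q (.node Γ'' Δ'' ts'') →
      SatStep (t, D) (t.setSeq q (insert A Γ'') Δ'', D)

/-- A state of the saturation procedure is saturated (terminal) when no
saturation step changes it any more. -/
def Saturated {Pm : MBParams} (s : NSeq Pm × Set (List ℕ × MBForm Pm)) : Prop :=
  ∀ s', SatStep s s' → s' = s


mutual
/-- The subtree of `t` at address `p`, as a function. -/
def NSeq.sub? {Pm : MBParams} : NSeq Pm → List ℕ → Option (NSeq Pm)
  | t, [] => some t
  | .node _ _ ts, i :: p => NSeqs.subs? ts i p
def NSeqs.subs? {Pm : MBParams} : NSeqs Pm → ℕ → List ℕ → Option (NSeq Pm)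
  | .nil, _, _ => none
  | .cons _ t _, 0, p => t.sub? p
  | .cons _ _ ts, n+1, p => NSeqs.subs? ts n p
end

/-- The label of the edge from the node at address `p` to its `i`-th child. -/
def labelAt {Pm : MBParams} (t : NSeq Pm) (p : List ℕ) (i : ℕ) : Option (MBLab Pm) :=
  match t.sub? p with
  | some (.node _ _ ts) => (NSeqs.get ts i).map Prod.fst
  | none => none

/-- The set of elements of `J` appearing in a formula. -/
def MBForm.jsetF {Pm : MBParams} : MBForm Pm → Set ℝ
  | .var _ => ∅
  | .top => ∅
  | .bot => ∅
  | .neg A => A.jsetF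
  | .conj A B => A.jsetF ∪ B.jsetF
  | .boxc α A => insert (α : ℝ) A.jsetF
  | .boxo α A => insert (α : ℝ) A.jsetF

mutual
/-- The numbers appearing in a nested-sequent (in formulas or brackets). -/
def NSeq.jsetT {Pm : MBParams} : NSeq Pm → Set ℝ
  | .node Γ Δ ts =>
      (⋃ A ∈ Γ, MBForm.jsetF A) ∪ (⋃ A ∈ Δ, MBForm.jsetF A) ∪ NSeqs.jsetTs ts
def NSeqs.jsetTs {Pm : MBParams} : NSeqs Pm → Set ℝ
  | .nil => ∅
  | .cons l t ts => insert l.α (t.jsetT ∪ NSeqs.jsetTs ts)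
end

/-- `(Γ ⇒ Δ, T)_J`: the numbers appearing in the nested-sequent, with `0` and `1`. -/
def jset {Pm : MBParams} (t : NSeq Pm) : Set ℝ :=
  insert (0:ℝ) (insert (1:ℝ) t.jsetT)

/-- `U` is an interpolated set of `Js`. -/
def Interpolated (Js U : Set ℝ) : Prop :=
  U.Finite ∧ U ⊆ Set.Icc (0:ℝ) 1 ∧ Js ⊆ U ∧
    ∀ α ∈ Js, ∀ β ∈ Js, α < β → (∀ γ ∈ Js, ¬ (α < γ ∧ γ < β)) →
      ∃! δ, δ ∈ U ∧ α < δ ∧ δ < β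

/-- `Suc U α`: the successor of `α` in the interpolated set `U` (with `Suc 1 = 1`). -/
noncomputable def Suc (U : Set ℝ) (α : ℝ) : ℝ := sInf ((U ∩ Set.Ioi α) ∪ {1})

/-- Auxiliary value of the canonical relation in case `q` is the child of `p`
via a bracket (`β` for `[·]^c_β`, `Suc β` for `[·]^o_β`), and `0` otherwise. -/
noncomputable def lval {Pm : MBParams} (t : NSeq Pm) (U : Set ℝ) (p q : List ℕ) : ℝ :=
  match q.getLast? with
  | none => 0
  | some i =>
      if q.dropLast = p then
        match labelAt t p i with
        | some l => (match l.d with | Side.c => l.α | Side.o => Suc U l.α)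
        | none => 0
      else 0

/-- The canonical relation `R_C` (on node addresses). -/
noncomputable def RC {Pm : MBParams} (t : NSeq Pm) (U : Set ℝ) (p q : List ℕ) : ℝ :=
  if p = q then 1 else max (lval t U p q) (lval t U q p)

/-- The worlds of the canonical model: the nodes of the saturated nested-sequent. -/
def World {Pm : MBParams} (t : NSeq Pm) : Type := {p : List ℕ // IsNode t p}

/-- The canonical relation `R_C`, as a function on the worlds. -/
noncomputable def RCW {Pm : MBParams} (t : NSeq Pm) (U : Set ℝ) (p q : World t) : ℝ :=
  RC t U p.val q.val

/-- The canonical valuation `V_C` of the propositional variables. -/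
def VC {Pm : MBParams} (t : NSeq Pm) (n : ℕ) : Set (World t) :=
  {p | ∃ Γ Δ ts, SubAt t p.val (.node Γ Δ ts) ∧ MBForm.var n ∈ Γ}

/-- `P_C`: the family of all definable sets of worlds of the canonical model. -/
def PC {Pm : MBParams} (t : NSeq Pm) (U : Set ℝ) : Set (Set (World t)) :=
  {X | ∃ A : MBForm Pm, X = MBForm.valR (RCW t U) (VC t) A}


/-!
Saturation steps only enlarge sequents and add children, and each of them preserves
unprovability, so the saturated tree is unprovable and closed under every step. The truth lemma
then goes by induction on formulas. Its modal cases work because the canonical relation is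
calibrated to the side conditions of the rules: across a bracket `[·]^{d'}_β` the world reached
lies in the scope of `□^d_α` exactly when `(α, d) ⪯ (β, d')`, the interpolated successor
`Suc β` being what makes an open bracket exceed `β` without reaching the next number of the tree.
-/

section TreeNavigation
variable {Pm : MBParams}

def NSeqs.length : NSeqs Pm → ℕ
  | .nil => 0
  | .cons _ _ ts => ts.length + 1

theorem NSeqs.get_length : ∀ ts : NSeqs Pm, ts.get ts.length = none
  | .nil => rfl
  | .cons _ _ ts => NSeqs.get_length ts

theorem NSeqs.get_snoc (l : MBLab Pm) (u : NSeq Pm) : ∀ (ts : NSeqs Pm) (j : ℕ),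
    (ts.snoc l u).get j = if j = ts.length then some (l, u) else ts.get j
  | .nil, 0 => rfl
  | .nil, _ + 1 => rfl
  | .cons _ _ ts, 0 => rfl
  | .cons _ _ ts, j + 1 => by simp [NSeqs.snoc, NSeqs.get, NSeqs.length, NSeqs.get_snoc l u ts j]

theorem NSeqs.get_setSeqs (p : List ℕ) (Γ Δ : Finset (MBForm Pm)) :
    ∀ (ts : NSeqs Pm) (i j : ℕ), (ts.setSeqs i p Γ Δ).get j =
      if j = i then (ts.get i).map fun x => (x.1, x.2.setSeq p Γ Δ) else ts.get j
  | .nil, _, _ => by simp [NSeqs.setSeqs, NSeqs.get]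
  | .cons _ _ _, 0, 0 => rfl
  | .cons _ _ _, 0, _ + 1 => rfl
  | .cons _ _ _, _ + 1, 0 => rfl
  | .cons _ _ ts, i + 1, j + 1 => by
    simp [NSeqs.setSeqs, NSeqs.get, NSeqs.get_setSeqs p Γ Δ ts i j]

theorem NSeqs.get_addChilds (p : List ℕ) (l : MBLab Pm) (u : NSeq Pm) :
    ∀ (ts : NSeqs Pm) (i j : ℕ), (ts.addChilds i p l u).get j =
      if j = i then (ts.get i).map fun x => (x.1, x.2.addChild p l u) else ts.get j
  | .nil, _, _ => by simp [NSeqs.addChilds, NSeqs.get]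
  | .cons _ _ _, 0, 0 => rfl
  | .cons _ _ _, 0, _ + 1 => rfl
  | .cons _ _ _, _ + 1, 0 => rfl
  | .cons _ _ ts, i + 1, j + 1 => by
    simp [NSeqs.addChilds, NSeqs.get, NSeqs.get_addChilds p l u ts i j]

theorem NSeqs.subs?_eq : ∀ (ts : NSeqs Pm) (i : ℕ) (p : List ℕ),
    ts.subs? i p = (ts.get i).bind fun x => x.2.sub? p
  | .nil, _, _ => rfl
  | .cons _ _ _, 0, _ => rfl
  | .cons _ _ ts, i + 1, p => NSeqs.subs?_eq ts i p

@[simp] theorem NSeq.sub?_nil (t : NSeq Pm) : t.sub? [] = some t := by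
  cases t; rfl

theorem NSeq.sub?_cons (Γ Δ : Finset (MBForm Pm)) (ts : NSeqs Pm) (i : ℕ) (p : List ℕ) :
    (NSeq.node Γ Δ ts).sub? (i :: p) = (ts.get i).bind fun x => x.2.sub? p :=
  NSeqs.subs?_eq ts i p

theorem subAt_iff_sub? {t u : NSeq Pm} {p : List ℕ} : SubAt t p u ↔ t.sub? p = some u := by
  refine ⟨fun h => ?_, fun h => ?_⟩
  · induction h with
    | here t => exact t.sub?_nil
    | there hget _ ih => rw [NSeq.sub?_cons, hget]; exact ih
  · induction p generalizing t with
    | nil => rw [NSeq.sub?_nil, Option.some_inj] at h; exact h ▸ .here _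
    | cons i p ih =>
      obtain ⟨Γ, Δ, ts⟩ := t
      rw [NSeq.sub?_cons, Option.bind_eq_some_iff] at h
      obtain ⟨⟨l, v⟩, hget, hv⟩ := h
      exact .there hget (ih hv)

theorem NSeq.exists_get_of_isSome_sub?_cons {Γ Δ : Finset (MBForm Pm)} {ts : NSeqs Pm}
    {i : ℕ} {p : List ℕ} (h : ((NSeq.node Γ Δ ts).sub? (i :: p)).isSome) :
    ∃ x, ts.get i = some x ∧ (x.2.sub? p).isSome := by
  rw [NSeq.sub?_cons] at h
  cases hx : ts.get i <;> simp_all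

theorem NSeq.sub?_append (t : NSeq Pm) (p q : List ℕ) :
    t.sub? (p ++ q) = (t.sub? p).bind fun u => u.sub? q := by
  induction p generalizing t with
  | nil => simp
  | cons i p ih =>
    obtain ⟨Γ, Δ, ts⟩ := t
    rw [List.cons_append, NSeq.sub?_cons, NSeq.sub?_cons]
    cases ts.get i <;> simp [ih]

def seqAt (t : NSeq Pm) (p : List ℕ) : Option (Finset (MBForm Pm) × Finset (MBForm Pm)) :=
  (t.sub? p).map fun | .node Γ Δ _ => (Γ, Δ)

theorem seqAt_cons (Γ Δ : Finset (MBForm Pm)) (ts : NSeqs Pm) (i : ℕ) (p : List ℕ) :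
    seqAt (.node Γ Δ ts) (i :: p) = (ts.get i).bind fun x => seqAt x.2 p := by
  unfold seqAt
  rw [NSeq.sub?_cons]
  cases ts.get i <;> rfl

theorem seqAt_eq_some_iff {t : NSeq Pm} {p : List ℕ} {Γ Δ : Finset (MBForm Pm)} :
    seqAt t p = some (Γ, Δ) ↔ ∃ ts, SubAt t p (.node Γ Δ ts) := by
  simp only [seqAt, subAt_iff_sub?, Option.map_eq_some_iff]
  constructor
  · rintro ⟨⟨Γ', Δ', ts⟩, h, he⟩
    cases he
    exact ⟨ts, h⟩
  · rintro ⟨ts, h⟩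
    exact ⟨_, h, rfl⟩

theorem seqAt_of_subAt {t : NSeq Pm} {p : List ℕ} {Γ Δ : Finset (MBForm Pm)} {ts : NSeqs Pm}
    (h : SubAt t p (.node Γ Δ ts)) : seqAt t p = some (Γ, Δ) :=
  seqAt_eq_some_iff.mpr ⟨ts, h⟩

theorem isNode_iff_exists_seqAt {t : NSeq Pm} {p : List ℕ} :
    IsNode t p ↔ ∃ Γ Δ, seqAt t p = some (Γ, Δ) := by
  simp only [IsNode, seqAt_eq_some_iff]
  constructor
  · rintro ⟨⟨Γ, Δ, ts⟩, h⟩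
    exact ⟨Γ, Δ, ts, h⟩
  · rintro ⟨Γ, Δ, ts, h⟩
    exact ⟨_, h⟩

theorem isNode_of_seqAt {t : NSeq Pm} {p : List ℕ} {Γ Δ : Finset (MBForm Pm)}
    (h : seqAt t p = some (Γ, Δ)) : IsNode t p :=
  isNode_iff_exists_seqAt.mpr ⟨Γ, Δ, h⟩

theorem labelAt_cons (Γ Δ : Finset (MBForm Pm)) (ts : NSeqs Pm) (j : ℕ) (q : List ℕ)
    (i : ℕ) :
    labelAt (.node Γ Δ ts) (j :: q) i = (ts.get j).bind fun x => labelAt x.2 q i := by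
  unfold labelAt
  rw [NSeq.sub?_cons]
  cases ts.get j <;> rfl

theorem labelAt_eq_some_iff {t : NSeq Pm} {p : List ℕ} {i : ℕ} {l : MBLab Pm} :
    labelAt t p i = some l ↔
      ∃ Γ Δ ts u, SubAt t p (.node Γ Δ ts) ∧ ts.get i = some (l, u) := by
  simp only [subAt_iff_sub?, labelAt]
  constructor
  · intro h
    split at h
    · next Γ Δ ts hp =>
      obtain ⟨⟨l', u⟩, hget, rfl⟩ := Option.map_eq_some_iff.mp h
      exact ⟨Γ, Δ, ts, u, hp, hget⟩
    · exact absurd h (by simp)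
  · rintro ⟨Γ, Δ, ts, u, hp, hget⟩
    simp [hp, hget]

def numKids (t : NSeq Pm) (p : List ℕ) : ℕ :=
  match t.sub? p with
  | some (.node _ _ ts) => ts.length
  | none => 0

end TreeNavigation

section TreeUpdates
variable {Pm : MBParams}

@[simp] theorem seqAt_nil (Γ Δ : Finset (MBForm Pm)) (ts : NSeqs Pm) :
    seqAt (.node Γ Δ ts) [] = some (Γ, Δ) := rfl

@[simp] theorem labelAt_nil (Γ Δ : Finset (MBForm Pm)) (ts : NSeqs Pm) (i : ℕ) :
    labelAt (.node Γ Δ ts) [] i = (ts.get i).map Prod.fst := rfl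

theorem NSeqs.setSeqs_of_get {p : List ℕ} {Γ Δ : Finset (MBForm Pm)} {l : MBLab Pm}
    {u : NSeq Pm} (hu : u.setSeq p Γ Δ = u) :
    ∀ {ts : NSeqs Pm} {i : ℕ}, ts.get i = some (l, u) → ts.setSeqs i p Γ Δ = ts
  | .cons _ _ _, 0, h => by cases h; simp [NSeqs.setSeqs, hu]
  | .cons _ _ _, _ + 1, h => by
    simp only [NSeqs.setSeqs, NSeqs.setSeqs_of_get hu (by simpa [NSeqs.get] using h)]

theorem NSeq.setSeq_self {t : NSeq Pm} {p : List ℕ} {Γ Δ : Finset (MBForm Pm)} {ts : NSeqs Pm}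
    (h : SubAt t p (.node Γ Δ ts)) : t.setSeq p Γ Δ = t := by
  induction p generalizing t with
  | nil => cases h; rfl
  | cons i p ih =>
    cases h with
    | there hget hsub => exact congrArg _ (NSeqs.setSeqs_of_get (ih hsub) hget)

theorem NSeq.setSeq_insert_left {t : NSeq Pm} {p : List ℕ} {Γ Δ : Finset (MBForm Pm)}
    {ts : NSeqs Pm} {A : MBForm Pm} (h : SubAt t p (.node Γ Δ ts)) (hA : A ∈ Γ) :
    t.setSeq p (insert A Γ) Δ = t := by
  rw [Finset.insert_eq_of_mem hA, NSeq.setSeq_self h]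

theorem NSeq.setSeq_insert_right {t : NSeq Pm} {p : List ℕ} {Γ Δ : Finset (MBForm Pm)}
    {ts : NSeqs Pm} {A : MBForm Pm} (h : SubAt t p (.node Γ Δ ts)) (hA : A ∈ Δ) :
    t.setSeq p Γ (insert A Δ) = t := by
  rw [Finset.insert_eq_of_mem hA, NSeq.setSeq_self h]

theorem seqAt_setSeq (t : NSeq Pm) (p q : List ℕ) (Γ' Δ' : Finset (MBForm Pm)) :
    seqAt (t.setSeq p Γ' Δ') q =
      if q = p ∧ (t.sub? p).isSome then some (Γ', Δ') else seqAt t q := by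
  induction p generalizing t q with
  | nil =>
    obtain ⟨Γ, Δ, ts⟩ := t
    cases q <;> simp [NSeq.setSeq, seqAt_cons]
  | cons i p ih =>
    obtain ⟨Γ, Δ, ts⟩ := t
    cases q with
    | nil => simp [NSeq.setSeq]
    | cons j q =>
      simp only [NSeq.setSeq, seqAt_cons, NSeqs.get_setSeqs, NSeq.sub?_cons, List.cons.injEq]
      by_cases hji : j = i
      · subst hji
        cases ts.get j <;> simp [ih]
      · simp [hji]

theorem labelAt_setSeq (t : NSeq Pm) (p q : List ℕ) (i : ℕ) (Γ' Δ' : Finset (MBForm Pm)) :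
    labelAt (t.setSeq p Γ' Δ') q i = labelAt t q i := by
  induction p generalizing t q with
  | nil =>
    obtain ⟨Γ, Δ, ts⟩ := t
    cases q <;> simp [NSeq.setSeq, labelAt_cons]
  | cons k p ih =>
    obtain ⟨Γ, Δ, ts⟩ := t
    cases q with
    | nil =>
      simp only [NSeq.setSeq, labelAt_nil, NSeqs.get_setSeqs]
      split_ifs with hik
      · subst hik; cases ts.get i <;> rfl
      · rfl
    | cons j q =>
      simp only [NSeq.setSeq, labelAt_cons, NSeqs.get_setSeqs]
      split_ifs with hjk
      · subst hjk; cases ts.get j <;> simp [ih]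
      · rfl

theorem numKids_cons {Γ Δ : Finset (MBForm Pm)} {ts : NSeqs Pm} {j : ℕ}
    {x : MBLab Pm × NSeq Pm}
    (h : ts.get j = some x) (q : List ℕ) : numKids (.node Γ Δ ts) (j :: q) = numKids x.2 q := by
  unfold numKids
  rw [NSeq.sub?_cons, h, Option.bind_some]

theorem seqAt_addChild (t : NSeq Pm) (p q : List ℕ) (l : MBLab Pm) (G D : Finset (MBForm Pm))
    (hp : (t.sub? p).isSome) :
    seqAt (t.addChild p l (.node G D .nil)) q =
      if q = p ++ [numKids t p] then some (G, D) else seqAt t q := by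
  induction p generalizing t q with
  | nil =>
    obtain ⟨Γ, Δ, ts⟩ := t
    rcases q with _ | ⟨j, _ | ⟨k, q⟩⟩
    · simp [NSeq.addChild]
    all_goals
      by_cases hj : j = ts.length <;>
      simp [NSeq.addChild, seqAt_cons, NSeqs.get_snoc, numKids, hj, NSeqs.get_length, NSeqs.get]
  | cons i p ih =>
    obtain ⟨Γ, Δ, ts⟩ := t
    obtain ⟨x, hx, hxp⟩ := NSeq.exists_get_of_isSome_sub?_cons hp
    rw [numKids_cons hx]
    cases q with
    | nil => simp [NSeq.addChild]
    | cons j q =>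
      simp only [NSeq.addChild, seqAt_cons, NSeqs.get_addChilds, List.cons_append,
        List.cons.injEq]
      by_cases hji : j = i
      · subst hji
        simp [hx, ih x.2 q hxp]
      · simp [hji]

theorem labelAt_addChild (t : NSeq Pm) (p q : List ℕ) (i : ℕ) (l : MBLab Pm)
    (G D : Finset (MBForm Pm)) (hp : (t.sub? p).isSome) :
    labelAt (t.addChild p l (.node G D .nil)) q i =
      if q = p ∧ i = numKids t p then some l else labelAt t q i := by
  induction p generalizing t q with
  | nil =>
    obtain ⟨Γ, Δ, ts⟩ := t
    cases q with
    | nil =>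
      by_cases hi : i = ts.length <;> simp [NSeq.addChild, NSeqs.get_snoc, numKids, hi]
    | cons j q =>
      by_cases hj : j = ts.length
      · subst hj
        cases q <;> simp [NSeq.addChild, labelAt_cons, NSeqs.get_snoc, NSeqs.get_length,
          NSeqs.get]
      · simp [NSeq.addChild, labelAt_cons, NSeqs.get_snoc, hj]
  | cons k p ih =>
    obtain ⟨Γ, Δ, ts⟩ := t
    obtain ⟨x, hx, hxp⟩ := NSeq.exists_get_of_isSome_sub?_cons hp
    rw [numKids_cons hx]
    cases q with
    | nil =>
      by_cases hik : i = k
      · subst hik; simp [NSeq.addChild, NSeqs.get_addChilds, hx]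
      · simp [NSeq.addChild, NSeqs.get_addChilds, hik]
    | cons j q =>
      simp only [NSeq.addChild, labelAt_cons, NSeqs.get_addChilds, List.cons.injEq]
      by_cases hjk : j = k
      · subst hjk
        simp [hx, ih x.2 q hxp]
      · simp [hjk]

theorem seqAt_numKids {t : NSeq Pm} {p : List ℕ} : seqAt t (p ++ [numKids t p]) = none := by
  unfold seqAt numKids
  rw [NSeq.sub?_append]
  rcases t.sub? p with _ | ⟨Γ, Δ, ts⟩
  · rfl
  · simp [NSeq.sub?_cons, NSeqs.get_length]

theorem labelAt_numKids {t : NSeq Pm} {p : List ℕ} : labelAt t p (numKids t p) = none := by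
  unfold labelAt numKids
  rcases t.sub? p with _ | ⟨Γ, Δ, ts⟩
  · rfl
  · simp [NSeqs.get_length]

end TreeUpdates

section Saturation
variable {Pm : MBParams}

structure Grows (t t' : NSeq Pm) : Prop where
  seqAt_subset : ∀ {q Γ Δ}, seqAt t q = some (Γ, Δ) →
    ∃ Γ' Δ', seqAt t' q = some (Γ', Δ') ∧ Γ ⊆ Γ' ∧ Δ ⊆ Δ'
  labelAt_eq : ∀ {q i l}, labelAt t q i = some l → labelAt t' q i = some l

theorem Grows.refl (t : NSeq Pm) : Grows t t :=
  ⟨fun h => ⟨_, _, h, subset_rfl, subset_rfl⟩, id⟩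

theorem Grows.trans {t t' t'' : NSeq Pm} (h : Grows t t') (h' : Grows t' t'') : Grows t t'' where
  seqAt_subset hq := by
    obtain ⟨Γ', Δ', hq', hΓ, hΔ⟩ := h.seqAt_subset hq
    obtain ⟨Γ'', Δ'', hq'', hΓ', hΔ'⟩ := h'.seqAt_subset hq'
    exact ⟨Γ'', Δ'', hq'', hΓ.trans hΓ', hΔ.trans hΔ'⟩
  labelAt_eq hl := h'.labelAt_eq (h.labelAt_eq hl)

theorem grows_setSeq {t : NSeq Pm} {p : List ℕ} {Γ Δ Γ' Δ' : Finset (MBForm Pm)}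
    {ts : NSeqs Pm} (hp : SubAt t p (.node Γ Δ ts)) (hΓ : Γ ⊆ Γ') (hΔ : Δ ⊆ Δ') :
    Grows t (t.setSeq p Γ' Δ') where
  seqAt_subset {q _ _} hq := by
    rw [seqAt_setSeq]
    split_ifs with hqp
    · rw [hqp.1, seqAt_of_subAt hp, Option.some_inj, Prod.mk.injEq] at hq
      exact ⟨Γ', Δ', rfl, hq.1 ▸ hΓ, hq.2 ▸ hΔ⟩
    · exact ⟨_, _, hq, subset_rfl, subset_rfl⟩
  labelAt_eq hl := by rwa [labelAt_setSeq]

theorem grows_addChild {t : NSeq Pm} {p : List ℕ} {Γ Δ : Finset (MBForm Pm)} {ts : NSeqs Pm}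
    (hp : SubAt t p (.node Γ Δ ts)) (l : MBLab Pm) (G D : Finset (MBForm Pm)) :
    Grows t (t.addChild p l (.node G D .nil)) where
  seqAt_subset {q _ _} hq := by
    have hq' : q ≠ p ++ [numKids t p] := by
      rintro rfl
      rw [seqAt_numKids] at hq
      cases hq
    rw [seqAt_addChild _ _ _ _ _ _ (by simp [subAt_iff_sub?.mp hp]), if_neg hq']
    exact ⟨_, _, hq, subset_rfl, subset_rfl⟩
  labelAt_eq {q i _} hl := by
    have hqi : ¬(q = p ∧ i = numKids t p) := by
      rintro ⟨rfl, rfl⟩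
      rw [labelAt_numKids] at hl
      cases hl
    rwa [labelAt_addChild _ _ _ _ _ _ _ (by simp [subAt_iff_sub?.mp hp]), if_neg hqi]

theorem SatStep.grows {s s' : NSeq Pm × Set (List ℕ × MBForm Pm)} (h : SatStep s s') :
    Grows s.1 s'.1 := by
  cases h with
  | andL hp _ =>
    exact grows_setSeq hp ((Finset.subset_insert _ _).trans (Finset.subset_insert _ _)) le_rfl
  | andR hp _ _ _ => exact grows_setSeq hp le_rfl (Finset.subset_insert _ _)
  | negL hp _ => exact grows_setSeq hp le_rfl (Finset.subset_insert _ _)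
  | negR hp _ => exact grows_setSeq hp (Finset.subset_insert _ _) le_rfl
  | boxL _ _ hp _ _ => exact grows_setSeq hp (Finset.subset_insert _ _) le_rfl
  | boxLsym hp _ _ _ _ => exact grows_setSeq hp (Finset.subset_insert _ _) le_rfl
  | boxLself hp _ _ => exact grows_setSeq hp (Finset.subset_insert _ _) le_rfl
  | boxR _ hp _ _ => exact grows_addChild hp _ _ _
  | boxRself hp _ => exact grows_setSeq hp le_rfl (Finset.subset_insert _ _)
  | boxC0 _ _ hp => exact grows_setSeq hp (Finset.subset_insert _ _) le_rfl

theorem SatStep.provable_of_provable {s s' : NSeq Pm × Set (List ℕ × MBForm Pm)}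
    (h : SatStep s s') (hs' : Provable true s'.1) : Provable true s.1 := by
  cases h with
  | andL hp hm => simpa [NSeq.setSeq_insert_left hp hm] using Provable.andL hp hs'
  | andR _ _ _ hnp => exact absurd hs' hnp
  | negL hp hm => simpa [NSeq.setSeq_insert_left hp hm] using Provable.negL hp hs'
  | negR hp hm => simpa [NSeq.setSeq_insert_right hp hm] using Provable.negR hp hs'
  | boxL hp hget hq hle hm =>
    simpa [NSeq.setSeq_insert_left hp hm] using Provable.boxL hp hget hq hle hs'
  | boxLsym hp hget hq hle hm =>
    simpa [NSeq.setSeq_insert_left hq hm] using Provable.boxLsym hp hget hq hle hs'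
  | boxLself hp hne hm =>
    simpa [NSeq.setSeq_insert_left hp hm] using Provable.boxLself hp hne hs'
  | @boxR t D p Γ Δ ts A α d hne hp hm _ =>
    have hbox : (⟨α, α.2, hne, d⟩ : MBLab Pm).box A = mkBox d α A := by cases d <;> rfl
    simpa [hbox, NSeq.setSeq_insert_right hp hm] using Provable.boxR hp hs'
  | boxRself hp hm => simpa [NSeq.setSeq_insert_right hp hm] using Provable.boxRself hp hs'
  | boxC0 hp hm hq => simpa [NSeq.setSeq_insert_left hp hm] using Provable.boxC0 hq hp hs'

theorem mkBox_injective {d d' : Side} {α α' : Pm.J} {A A' : MBForm Pm}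
    (h : mkBox d α A = mkBox d' α' A') : d = d' ∧ α = α' ∧ A = A' := by
  cases d <;> cases d' <;> simp_all [mkBox]

def BoxesWitnessed (s : NSeq Pm × Set (List ℕ × MBForm Pm)) : Prop :=
  ∀ p d α A, (p, mkBox d α A) ∈ s.2 → ∃ i l Γ Δ, l.α = (α : ℝ) ∧ l.d = d ∧
    labelAt s.1 p i = some l ∧ seqAt s.1 (p ++ [i]) = some (Γ, Δ) ∧ A ∈ Δ

theorem BoxesWitnessed.of_grows {t t' : NSeq Pm} {D : Set (List ℕ × MBForm Pm)}
    (h : BoxesWitnessed (t, D)) (hg : Grows t t') : BoxesWitnessed (t', D) := by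
  intro p d α A hm
  obtain ⟨i, l, Γ, Δ, hα, hd, hl, hq, hA⟩ := h p d α A hm
  obtain ⟨Γ', Δ', hq', -, hΔ⟩ := hg.seqAt_subset hq
  exact ⟨i, l, Γ', Δ', hα, hd, hg.labelAt_eq hl, hq', hΔ hA⟩

theorem SatStep.boxesWitnessed {s s' : NSeq Pm × Set (List ℕ × MBForm Pm)} (h : SatStep s s')
    (hs : BoxesWitnessed s) : BoxesWitnessed s' := by
  have hg := h.grows
  cases h with
  | @boxR t D p Γ Δ ts A α d hne hp _ _ =>
    intro q d' α' A' hm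
    rcases Set.mem_insert_iff.mp hm with hnew | hold
    · obtain ⟨rfl, hbox⟩ := Prod.mk.inj hnew
      obtain ⟨rfl, rfl, rfl⟩ := mkBox_injective hbox
      have hpt : (t.sub? q).isSome := by simp [subAt_iff_sub?.mp hp]
      refine ⟨numKids t q, ⟨_, α'.2, hne, _⟩, ∅, {A'}, rfl, rfl, ?_, ?_,
        Finset.mem_singleton_self A'⟩
      · rw [labelAt_addChild _ _ _ _ _ _ _ hpt, if_pos ⟨rfl, rfl⟩]
      · rw [seqAt_addChild _ _ _ _ _ _ hpt, if_pos rfl]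
    · exact BoxesWitnessed.of_grows hs hg q d' α' A' hold
  | _ => exact BoxesWitnessed.of_grows hs hg

section ReflTransGen
variable {s s' : NSeq Pm × Set (List ℕ × MBForm Pm)} (h : Relation.ReflTransGen SatStep s s')
include h

theorem Grows.of_reflTransGen : Grows s.1 s'.1 := by
  induction h with
  | refl => exact Grows.refl _
  | tail _ hstep ih => exact ih.trans hstep.grows

theorem not_provable_of_reflTransGen (hs : ¬Provable true s.1) :
    ¬Provable true s'.1 := by
  induction h with
  | refl => exact hs
  | tail _ hstep ih => exact fun h' => ih (hstep.provable_of_provable h')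

theorem BoxesWitnessed.of_reflTransGen (hs : BoxesWitnessed s) :
    BoxesWitnessed s' := by
  induction h with
  | refl => exact hs
  | tail _ hstep ih => exact hstep.boxesWitnessed ih

end ReflTransGen

theorem exists_get_of_labelAt {t : NSeq Pm} {p : List ℕ} {Γ Δ : Finset (MBForm Pm)} {i : ℕ}
    {l : MBLab Pm} (hp : seqAt t p = some (Γ, Δ)) (hl : labelAt t p i = some l) :
    ∃ ts u, SubAt t p (.node Γ Δ ts) ∧ ts.get i = some (l, u) := by
  obtain ⟨Γ', Δ', ts, u, hsub, hget⟩ := labelAt_eq_some_iff.mp hl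
  obtain ⟨rfl, rfl⟩ := Prod.mk.inj (Option.some_inj.mp ((seqAt_of_subAt hsub).symm.trans hp))
  exact ⟨ts, u, hsub, hget⟩

namespace Saturated

variable {t : NSeq Pm} {D : Set (List ℕ × MBForm Pm)} (hsat : Saturated (t, D))
  {p : List ℕ} {Γ Δ : Finset (MBForm Pm)} (hp : seqAt t p = some (Γ, Δ))
include hsat hp

theorem eq_of_setSeq {Γ' Δ' : Finset (MBForm Pm)} (h : SatStep (t, D) (t.setSeq p Γ' Δ', D)) :
    Γ' = Γ ∧ Δ' = Δ := by
  have hfix := congrArg (fun s => seqAt s.1 p) (hsat _ h)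
  have hnode : (t.sub? p).isSome := by
    obtain ⟨ts, hsub⟩ := seqAt_eq_some_iff.mp hp
    simp [subAt_iff_sub?.mp hsub]
  simp only [seqAt_setSeq, hnode, and_self, if_true, hp, Option.some_inj] at hfix
  exact Prod.mk.inj hfix

theorem andL {A B : MBForm Pm} (hm : .conj A B ∈ Γ) : A ∈ Γ ∧ B ∈ Γ := by
  obtain ⟨ts, hsub⟩ := seqAt_eq_some_iff.mp hp
  have hΓ := (hsat.eq_of_setSeq hp (.andL hsub hm)).1
  exact ⟨hΓ ▸ Finset.mem_insert_self _ _,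
    hΓ ▸ Finset.mem_insert_of_mem (Finset.mem_insert_self _ _)⟩

theorem andR (hnp : ¬Provable true t) {A B : MBForm Pm} (hm : .conj A B ∈ Δ) :
    A ∈ Δ ∨ B ∈ Δ := by
  obtain ⟨ts, hsub⟩ := seqAt_eq_some_iff.mp hp
  have hC : ∃ C, (C = A ∨ C = B) ∧ ¬Provable true (t.setSeq p Γ (insert C Δ)) := by
    by_contra! hprov
    exact hnp (NSeq.setSeq_insert_right hsub hm ▸
      Provable.andR hsub (hprov A (.inl rfl)) (hprov B (.inr rfl)))
  obtain ⟨C, hCAB, hC⟩ := hC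
  have hCΔ : C ∈ Δ :=
    (hsat.eq_of_setSeq hp (.andR hsub hm hCAB hC)).2 ▸ Finset.mem_insert_self _ _
  rcases hCAB with rfl | rfl
  exacts [.inl hCΔ, .inr hCΔ]

theorem negL {A : MBForm Pm} (hm : .neg A ∈ Γ) : A ∈ Δ := by
  obtain ⟨ts, hsub⟩ := seqAt_eq_some_iff.mp hp
  exact (hsat.eq_of_setSeq hp (.negL hsub hm)).2 ▸ Finset.mem_insert_self _ _

theorem negR {A : MBForm Pm} (hm : .neg A ∈ Δ) : A ∈ Γ := by
  obtain ⟨ts, hsub⟩ := seqAt_eq_some_iff.mp hp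
  exact (hsat.eq_of_setSeq hp (.negR hsub hm)).1 ▸ Finset.mem_insert_self _ _

theorem boxLself {d : Side} {α : Pm.J} {A : MBForm Pm} (hne : ¬((α : ℝ) = 1 ∧ d = .o))
    (hm : mkBox d α A ∈ Γ) : A ∈ Γ := by
  obtain ⟨ts, hsub⟩ := seqAt_eq_some_iff.mp hp
  exact (hsat.eq_of_setSeq hp (.boxLself hsub hne hm)).1 ▸ Finset.mem_insert_self _ _

theorem boxRself {A : MBForm Pm} (hm : .boxc ⟨1, Pm.one_mem⟩ A ∈ Δ) : A ∈ Δ := by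
  obtain ⟨ts, hsub⟩ := seqAt_eq_some_iff.mp hp
  exact (hsat.eq_of_setSeq hp (.boxRself hsub hm)).2 ▸ Finset.mem_insert_self _ _

theorem boxC0 {A : MBForm Pm} (hm : .boxc ⟨0, Pm.zero_mem⟩ A ∈ Γ) {q : List ℕ}
    {Γ' Δ' : Finset (MBForm Pm)} (hq : seqAt t q = some (Γ', Δ')) : A ∈ Γ' := by
  obtain ⟨ts, hsub⟩ := seqAt_eq_some_iff.mp hp
  obtain ⟨ts', hsub'⟩ := seqAt_eq_some_iff.mp hq
  exact (hsat.eq_of_setSeq hq (.boxC0 hsub hm hsub')).1 ▸ Finset.mem_insert_self _ _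

theorem boxL {i : ℕ} {l : MBLab Pm} (hl : labelAt t p i = some l) {Γ' Δ' : Finset (MBForm Pm)}
    (hq : seqAt t (p ++ [i]) = some (Γ', Δ')) {d : Side} {α : Pm.J} {A : MBForm Pm}
    (hle : pleq α d l.α l.d) (hm : mkBox d α A ∈ Γ) : A ∈ Γ' := by
  obtain ⟨ts, u, hsub, hget⟩ := exists_get_of_labelAt hp hl
  obtain ⟨ts', hsub'⟩ := seqAt_eq_some_iff.mp hq
  exact (hsat.eq_of_setSeq hq (.boxL hsub hget hsub' hle hm)).1 ▸ Finset.mem_insert_self _ _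

theorem boxLsym {i : ℕ} {l : MBLab Pm} (hl : labelAt t p i = some l)
    {Γ' Δ' : Finset (MBForm Pm)} (hq : seqAt t (p ++ [i]) = some (Γ', Δ')) {d : Side}
    {α : Pm.J} {A : MBForm Pm} (hle : pleq α d l.α l.d) (hm : mkBox d α A ∈ Γ') :
    A ∈ Γ := by
  obtain ⟨ts, u, hsub, hget⟩ := exists_get_of_labelAt hp hl
  obtain ⟨ts', hsub'⟩ := seqAt_eq_some_iff.mp hq
  exact (hsat.eq_of_setSeq hp (.boxLsym hsub hget hsub' hle hm)).1 ▸ Finset.mem_insert_self _ _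

theorem boxR {d : Side} {α : Pm.J} {A : MBForm Pm} (hne : (α : ℝ) ≠ 1)
    (hm : mkBox d α A ∈ Δ) : (p, mkBox d α A) ∈ D := by
  obtain ⟨ts, hsub⟩ := seqAt_eq_some_iff.mp hp
  by_contra hD
  have hfix : insert (p, mkBox d α A) D = D := congrArg Prod.snd (hsat _ (.boxR hne hsub hm hD))
  exact hD (hfix ▸ Set.mem_insert _ D)

end Saturated

end Saturation

section Numbers
variable {Pm : MBParams}

theorem NSeqs.subset_jsetTs_of_get : ∀ {ts : NSeqs Pm} {i : ℕ} {l : MBLab Pm} {u : NSeq Pm},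
    ts.get i = some (l, u) → insert l.α u.jsetT ⊆ ts.jsetTs
  | .cons _ _ _, 0, _, _, h => by
    cases h
    exact Set.insert_subset_insert Set.subset_union_left
  | .cons _ _ ts, i + 1, _, _, h => fun _ hx => Set.mem_insert_of_mem _
    (Set.mem_union_right _ (NSeqs.subset_jsetTs_of_get (ts := ts) (i := i) h hx))

theorem SubAt.jsetT_subset {t u : NSeq Pm} {p : List ℕ} (h : SubAt t p u) :
    u.jsetT ⊆ t.jsetT := by
  induction h with
  | here => exact subset_rfl
  | there hget _ ih =>
    exact ih.trans ((Set.subset_insert _ _).trans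
      ((NSeqs.subset_jsetTs_of_get hget).trans Set.subset_union_right))

theorem jsetT_subset_jset (t : NSeq Pm) : t.jsetT ⊆ jset t :=
  fun _ hx => .inr (.inr hx)

theorem mem_jset_of_labelAt {t : NSeq Pm} {p : List ℕ} {i : ℕ} {l : MBLab Pm}
    (hl : labelAt t p i = some l) : l.α ∈ jset t := by
  obtain ⟨Γ, Δ, ts, u, hsub, hget⟩ := labelAt_eq_some_iff.mp hl
  exact jsetT_subset_jset t (hsub.jsetT_subset
    (Set.subset_union_right (NSeqs.subset_jsetTs_of_get hget (Set.mem_insert _ _))))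

theorem mem_jset_of_mkBox {t : NSeq Pm} {p : List ℕ} {Γ Δ : Finset (MBForm Pm)}
    (hp : seqAt t p = some (Γ, Δ)) {d : Side} {α : Pm.J} {A : MBForm Pm}
    (hm : mkBox d α A ∈ Γ ∨ mkBox d α A ∈ Δ) : (α : ℝ) ∈ jset t := by
  obtain ⟨ts, hsub⟩ := seqAt_eq_some_iff.mp hp
  have hα : (α : ℝ) ∈ (mkBox d α A).jsetF := by cases d <;> exact Set.mem_insert _ _
  refine jsetT_subset_jset t (hsub.jsetT_subset (Set.subset_union_left ?_))
  rcases hm with hm | hm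
  exacts [.inl (Set.mem_biUnion hm hα), .inr (Set.mem_biUnion hm hα)]

theorem lt_suc {U : Set ℝ} (hU : U.Finite) {β : ℝ} (hβ : β < 1) : β < Suc U β := by
  refine ((hU.inter_of_left _).union (Set.finite_singleton 1)).lt_csInf_iff ⟨1, .inr rfl⟩
    |>.mpr ?_
  rintro x (hx | rfl)
  exacts [hx.2, hβ]

theorem Interpolated.suc_lt {Js U : Set ℝ} (hU : Interpolated Js U) {α β : ℝ}
    (hα : α ∈ Js) (hβ : β ∈ Js) (hβα : β < α) : Suc U β < α := by
  obtain ⟨hUfin, -, hJsU, hint⟩ := hU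
  have hfin : (Js ∩ Set.Ioi β).Finite := (hUfin.subset hJsU).inter_of_left _
  -- `γ` is the successor of `β` in `Js`, and `δ` the point of `U` interpolated between them
  set γ := sInf (Js ∩ Set.Ioi β)
  obtain ⟨hγ, hβγ⟩ : γ ∈ Js ∩ Set.Ioi β :=
    Set.Nonempty.csInf_mem ⟨α, hα, hβα⟩ hfin
  have hγα : γ ≤ α := csInf_le hfin.bddBelow ⟨hα, hβα⟩
  have hgap : ∀ x ∈ Js, ¬(β < x ∧ x < γ) := fun x hx ⟨hβx, hxγ⟩ =>
    (csInf_le hfin.bddBelow ⟨hx, hβx⟩).not_gt hxγ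
  obtain ⟨δ, ⟨hδ, hβδ, hδγ⟩, -⟩ := hint β hβ γ hγ hβγ hgap
  have hsuc : Suc U β ≤ δ := csInf_le
    ((hUfin.inter_of_left _).union (Set.finite_singleton 1)).bddBelow (.inl ⟨hδ, hβδ⟩)
  linarith

/-- The value of the canonical relation across a bracket labelled `l`. -/
noncomputable def MBLab.weight (U : Set ℝ) (l : MBLab Pm) : ℝ :=
  match l.d with
  | .c => l.α
  | .o => Suc U l.α

/-- `d.Admits α r`: a world at relation value `r` is in the scope of `□^d_α`. -/
def Side.Admits : Side → ℝ → ℝ → Prop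
  | .c, α, r => α ≤ r
  | .o, α, r => α < r

theorem MBForm.valR_mkBox {S : Type} (R : S → S → ℝ) (V : ℕ → Set S) (d : Side)
    (α : Pm.J) (A : MBForm Pm) :
    (mkBox d α A).valR R V = {s | ∀ t, d.Admits α (R s t) → t ∈ A.valR R V} := by
  cases d <;> rfl

theorem Side.Admits.mono {d : Side} {α r r' : ℝ} (h : d.Admits α r) (hr : r ≤ r') :
    d.Admits α r' := by
  cases d
  exacts [le_trans (α := ℝ) h hr, lt_of_lt_of_le (α := ℝ) h hr]

theorem Side.admits_max_iff {d : Side} {α a b : ℝ} :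
    d.Admits α (max a b) ↔ d.Admits α a ∨ d.Admits α b := by
  cases d
  exacts [le_max_iff, lt_max_iff]

theorem Side.Admits.eq_zero {d : Side} {α : ℝ} (h : d.Admits α 0) (hα : 0 ≤ α) :
    d = .c ∧ α = 0 := by
  cases d
  exacts [⟨rfl, le_antisymm h hα⟩, absurd hα (not_le.mpr h)]

theorem Side.admits_one_iff {d : Side} {α : ℝ} (hα : α ≤ 1) :
    d.Admits α 1 ↔ ¬(α = 1 ∧ d = .o) := by
  cases d
  · simpa [Side.Admits] using hα
  · simp [Side.Admits, lt_iff_le_and_ne, hα]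

theorem admits_weight_iff {Js U : Set ℝ} (hU : Interpolated Js U) {d : Side} {α : ℝ}
    {l : MBLab Pm} (hα : α ∈ Js) (hl : l.α ∈ Js) :
    d.Admits α (l.weight U) ↔ pleq α d l.α l.d := by
  obtain ⟨β, hβJ, hβ1, d'⟩ := l
  have hlt : ∀ {α}, α ≤ β → α < Suc U β :=
    fun h => h.trans_lt (lt_suc hU.1 (lt_of_le_of_ne (Pm.subI hβJ).2 hβ1))
  have hle : α ≤ Suc U β → α ≤ β :=
    fun h => not_lt.mp fun hβα => (hU.suc_lt hα hl hβα).not_ge h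
  cases d <;> cases d' <;> simp only [Side.Admits, MBLab.weight, pleq]
  exacts [⟨hle, fun h => (hlt h).le⟩, ⟨fun h => hle h.le, hlt⟩]

end Numbers

section CanonicalModel
variable {Pm : MBParams}

theorem lval_append_singleton (t : NSeq Pm) (U : Set ℝ) {p : List ℕ} {i : ℕ} {l : MBLab Pm}
    (hl : labelAt t p i = some l) : lval t U p (p ++ [i]) = l.weight U := by
  simp only [lval, List.getLast?_concat, List.dropLast_concat, if_true, hl]
  rfl

theorem lval_eq_zero_or (t : NSeq Pm) (U : Set ℝ) (p q : List ℕ) :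
    lval t U p q = 0 ∨
      ∃ i l, q = p ++ [i] ∧ labelAt t p i = some l ∧ lval t U p q = l.weight U := by
  rcases q.eq_nil_or_concat' with rfl | ⟨r, i, rfl⟩
  · simp [lval]
  by_cases hr : r = p
  · subst hr
    cases hl : labelAt t r i with
    | none => simp [lval, hl]
    | some l => exact .inr ⟨i, l, rfl, hl, lval_append_singleton t U hl⟩
  · simp [lval, hr]

theorem weight_le_RC (t : NSeq Pm) (U : Set ℝ) {p : List ℕ} {i : ℕ} {l : MBLab Pm}
    (hl : labelAt t p i = some l) : l.weight U ≤ RC t U p (p ++ [i]) := by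
  rw [RC, if_neg (by simp), lval_append_singleton t U hl]
  exact le_max_left _ _

variable {t : NSeq Pm} {D : Set (List ℕ × MBForm Pm)} {U : Set ℝ}

theorem Saturated.mem_left_of_admits (hsat : Saturated (t, D)) (hU : Interpolated (jset t) U)
    {p q : List ℕ} {Γ Δ Γ' Δ' : Finset (MBForm Pm)} (hp : seqAt t p = some (Γ, Δ))
    (hq : seqAt t q = some (Γ', Δ')) {d : Side} {α : Pm.J} {A : MBForm Pm}
    (hm : mkBox d α A ∈ Γ) (hR : d.Admits α (RC t U p q)) : A ∈ Γ' := by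
  have hαJ := mem_jset_of_mkBox hp (.inl hm)
  have hα := Pm.subI α.2
  have of_zero (h0 : d.Admits α 0) : A ∈ Γ' := by
    obtain ⟨rfl, hα0⟩ := h0.eq_zero hα.1
    obtain rfl : α = ⟨0, Pm.zero_mem⟩ := Subtype.ext hα0
    exact hsat.boxC0 hp hm hq
  by_cases hpq : p = q
  · subst hpq
    obtain ⟨rfl, rfl⟩ := Prod.mk.inj (Option.some_inj.mp (hp.symm.trans hq))
    rw [RC, if_pos rfl, Side.admits_one_iff hα.2] at hR
    exact hsat.boxLself hp hR hm
  rw [RC, if_neg hpq, Side.admits_max_iff] at hR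
  rcases hR with hR | hR
  · rcases lval_eq_zero_or t U p q with h0 | ⟨i, l, rfl, hl, hw⟩
    · exact of_zero (h0 ▸ hR)
    · rw [hw, admits_weight_iff hU hαJ (mem_jset_of_labelAt hl)] at hR
      exact hsat.boxL hp hl hq hR hm
  · rcases lval_eq_zero_or t U q p with h0 | ⟨i, l, rfl, hl, hw⟩
    · exact of_zero (h0 ▸ hR)
    · rw [hw, admits_weight_iff hU hαJ (mem_jset_of_labelAt hl)] at hR
      exact hsat.boxLsym hq hl hp hR hm

theorem Saturated.exists_right_of_mkBox (hsat : Saturated (t, D)) (hnp : ¬Provable true t)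
    (hD : BoxesWitnessed (t, D)) (hU : Interpolated (jset t) U) {p : List ℕ}
    {Γ Δ : Finset (MBForm Pm)} (hp : seqAt t p = some (Γ, Δ)) {d : Side} {α : Pm.J}
    {A : MBForm Pm} (hm : mkBox d α A ∈ Δ) :
    ∃ q Γ' Δ', seqAt t q = some (Γ', Δ') ∧ A ∈ Δ' ∧ d.Admits α (RC t U p q) := by
  by_cases h1 : (α : ℝ) = 1
  · obtain rfl : α = ⟨1, Pm.one_mem⟩ := Subtype.ext h1
    cases d
    · exact ⟨p, Γ, Δ, hp, hsat.boxRself hp hm, by simp [RC, Side.Admits]⟩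
    · obtain ⟨ts, hsub⟩ := seqAt_eq_some_iff.mp hp
      exact absurd (Provable.axBoxO1 hsub hm) hnp
  obtain ⟨i, l, Γ', Δ', hlα, hld, hl, hq, hA⟩ := hD p d α A (hsat.boxR hp h1 hm)
  refine ⟨p ++ [i], Γ', Δ', hq, hA, Side.Admits.mono ?_ (weight_le_RC t U hl)⟩
  rw [admits_weight_iff hU (mem_jset_of_mkBox hp (.inr hm)) (mem_jset_of_labelAt hl), hlα, hld]
  cases d <;> exact le_refl (α : ℝ)

variable (t U) in
def TruthLemma (A : MBForm Pm) : Prop :=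
  ∀ (w : World t) {Γ Δ : Finset (MBForm Pm)}, seqAt t w.1 = some (Γ, Δ) →
    (A ∈ Γ → w ∈ A.valR (RCW t U) (VC t)) ∧ (A ∈ Δ → w ∉ A.valR (RCW t U) (VC t))

theorem TruthLemma.mkBox (hsat : Saturated (t, D)) (hnp : ¬Provable true t)
    (hD : BoxesWitnessed (t, D)) (hU : Interpolated (jset t) U) {A : MBForm Pm}
    (ih : TruthLemma t U A) (d : Side) (α : Pm.J) : TruthLemma t U (mkBox d α A) := by
  intro w Γ Δ hw
  rw [MBForm.valR_mkBox]
  refine ⟨fun hm w' hR => ?_, fun hm hbox => ?_⟩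
  · obtain ⟨Γ', Δ', hw'⟩ := isNode_iff_exists_seqAt.mp w'.2
    exact (ih w' hw').1 (hsat.mem_left_of_admits hU hw hw' hm hR)
  · obtain ⟨q, Γ', Δ', hq, hA, hR⟩ := hsat.exists_right_of_mkBox hnp hD hU hw hm
    exact (ih ⟨q, isNode_of_seqAt hq⟩ hq).2 hA (hbox _ hR)

theorem truthLemma (hsat : Saturated (t, D)) (hnp : ¬Provable true t)
    (hD : BoxesWitnessed (t, D)) (hU : Interpolated (jset t) U) (A : MBForm Pm) :
    TruthLemma t U A := by
  induction A with
  | var n =>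
    intro w Γ Δ hw
    refine ⟨fun hA => ?_, fun hA ⟨Γ', Δ', ts, hsub, hA'⟩ => ?_⟩
    · obtain ⟨ts, hsub⟩ := seqAt_eq_some_iff.mp hw
      exact ⟨Γ, Δ, ts, hsub, hA⟩
    · obtain ⟨rfl, rfl⟩ :=
        Prod.mk.inj (Option.some_inj.mp ((seqAt_of_subAt hsub).symm.trans hw))
      exact hnp (.axId hsub hA' hA)
  | top =>
    intro w Γ Δ hw
    obtain ⟨ts, hsub⟩ := seqAt_eq_some_iff.mp hw
    exact ⟨fun _ => Set.mem_univ _, fun hA _ => hnp (.axTop hsub hA)⟩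
  | bot =>
    intro w Γ Δ hw
    obtain ⟨ts, hsub⟩ := seqAt_eq_some_iff.mp hw
    exact ⟨fun hA => absurd (.axBot hsub hA) hnp, fun _ h => h⟩
  | neg A ih =>
    intro w Γ Δ hw
    exact ⟨fun hA => (ih w hw).2 (hsat.negL hw hA),
      fun hA h => h ((ih w hw).1 (hsat.negR hw hA))⟩
  | conj A B ihA ihB =>
    intro w Γ Δ hw
    refine ⟨fun hAB => ?_, fun hAB h => ?_⟩
    · obtain ⟨hA, hB⟩ := hsat.andL hw hAB
      exact ⟨(ihA w hw).1 hA, (ihB w hw).1 hB⟩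
    · rcases hsat.andR hw hnp hAB with hA | hB
      exacts [(ihA w hw).2 hA h.1, (ihB w hw).2 hB h.2]
  | boxc α A ih => exact ih.mkBox hsat hnp hD hU .c α
  | boxo α A ih => exact ih.mkBox hsat hnp hD hU .o α

end CanonicalModel

/-- The canonical embedding `E_C` is the identity on node addresses. -/
theorem falsified_in_canonical_model {Pm : MBParams} (t0 : NSeq Pm)
    (h0 : ¬ Provable true t0) (s : NSeq Pm × Set (List ℕ × MBForm Pm))
    (hre : Relation.ReflTransGen SatStep (t0, (∅ : Set (List ℕ × MBForm Pm))) s)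
    (hsat : Saturated s) (U : Set ℝ) (hU : Interpolated (jset s.1) U) :
    ∀ p Γ Δ ts, SubAt t0 p (.node Γ Δ ts) →
      ∃ hp : IsNode s.1 p,
        (∀ A ∈ Γ, (⟨p, hp⟩ : World s.1) ∈ MBForm.valR (RCW s.1 U) (VC s.1) A) ∧
        (∀ A ∈ Δ, (⟨p, hp⟩ : World s.1) ∉ MBForm.valR (RCW s.1 U) (VC s.1) A) := by
  intro p Γ Δ ts hsub
  obtain ⟨Γ', Δ', hp, hΓ, hΔ⟩ :=
    (Grows.of_reflTransGen hre).seqAt_subset (seqAt_of_subAt hsub)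
  have hnp : ¬Provable true s.1 := not_provable_of_reflTransGen hre h0
  have hD : BoxesWitnessed s :=
    BoxesWitnessed.of_reflTransGen hre fun _ _ _ _ h => absurd h (Set.notMem_empty _)
  have truth := truthLemma hsat hnp hD hU
  exact ⟨isNode_of_seqAt hp, fun A hA => (truth A _ hp).1 (hΓ hA),
    fun A hA => (truth A _ hp).2 (hΔ hA)⟩

end MBQL
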